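/- Let p ≥ 1 be an integer. There exists a constant C = C(p) > 0 such that for every family of integrable functions f_{j,k} : 𝕋² × 𝕋² → ℝ indexed by the pairs 1 ≤ j < k ≤ 2p, one has ∫_{(𝕋²)^{2p}} ∏_{1≤j<k≤2p} |f_{j,k}(x_j, x_k)|^{1/(2p−1)} dx₁ ⋯ dx_{2p} ≤ C · ∏_{1≤j<k≤2p} ( ∫_{𝕋²×𝕋²} |f_{j,k}(y,z)| dy dz )^{1/(2p−1)}. -/

import Mathlib

open MeasureTheory
open scoped ENNReal

instance : Fact (0 < 2 * Real.pi) := ⟨by positivity⟩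

/-- The two-dimensional torus `𝕋² = (ℝ/2πℤ)²` with its Haar (Lebesgue) measure. -/
abbrev Torus2 : Type := AddCircle (2 * Real.pi) × AddCircle (2 * Real.pi)

/-!
This is Finner's inequality for the complete graph, and it holds with `C = 1`. The variables are
integrated out one at a time. Integrating out `x₀` by Hölder's inequality (its `n - 1` incident
factors have weights `1/(n-1)` summing to `1`) turns each pair factor `F₀ₖ(x₀, xₖ)` into the
one-variable factor `∫ F₀ₖ(t, xₖ) dt` of `xₖ`, with the same weight. So the induction runs over
integrands made of pair factors and of `s` rows of one-variable factors, where every variable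
still carries total weight `(s + n - 1) r = 1`. Measurability is arranged by replacing each
`|f_{jk}|` by a measurable majorant that agrees with it almost everywhere.
-/

open Finset

theorem AEMeasurable.exists_measurable_ge_ae_eq {α β : Type*} [MeasurableSpace α]
    [MeasurableSpace β] [Preorder β] [OrderTop β] {μ : Measure α} {f : α → β}
    (hf : AEMeasurable f μ) : ∃ g : α → β, Measurable g ∧ f ≤ g ∧ g =ᵐ[μ] f := by
  classical
  obtain ⟨s, hsub, hs, hs0⟩ := exists_measurable_superset_of_null hf.ae_eq_mk
  have hagree : ∀ x ∉ s, hf.mk f x = f x := fun x hx => (not_not.mp fun h => hx (hsub h)).symm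
  refine ⟨s.piecewise (fun _ => ⊤) (hf.mk f), measurable_const.piecewise hs hf.measurable_mk,
    fun x => ?_, ?_⟩
  · by_cases hx : x ∈ s
    · simp [hx]
    · rw [Set.piecewise_eq_of_notMem _ _ _ hx, hagree x hx]
  · filter_upwards [measure_eq_zero_iff_ae_notMem.mp hs0] with x hx
    rw [Set.piecewise_eq_of_notMem _ _ _ hx, hagree x hx]

theorem lintegral_prod_rpow_le_of_card_mul_eq_one {α ι : Type*} [MeasurableSpace α]
    [Fintype ι] {μ : Measure α} {f : ι → α → ℝ≥0∞} (hf : ∀ i, AEMeasurable (f i) μ) {r : ℝ}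
    (hr : Fintype.card ι * r = 1) :
    ∫⁻ a, ∏ i, f i a ^ r ∂μ ≤ ∏ i, (∫⁻ a, f i a ∂μ) ^ r := by
  have hr0 : 0 ≤ r := by
    by_contra! h
    nlinarith [(Nat.cast_nonneg (Fintype.card ι) : (0 : ℝ) ≤ _)]
  exact ENNReal.lintegral_prod_norm_pow_le _ (fun i _ => hf i)
    (by simpa [Finset.sum_const, nsmul_eq_mul] using hr) (fun _ _ => hr0)

theorem lintegral_pi_fin_succ {X : Type*} [MeasurableSpace X] (μ : Measure X) [SigmaFinite μ]
    {n : ℕ} {f : (Fin (n + 1) → X) → ℝ≥0∞} (hf : Measurable f) :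
    ∫⁻ x, f x ∂Measure.pi (fun _ => μ) =
      ∫⁻ y, ∫⁻ t, f (Fin.cons t y) ∂μ ∂Measure.pi (fun _ => μ) := by
  set e := (MeasurableEquiv.piFinSuccAbove (fun _ : Fin (n + 1) => X) 0).symm
  have he : MeasurePreserving e (μ.prod (Measure.pi fun _ => μ)) (Measure.pi fun _ => μ) :=
    (measurePreserving_piFinSuccAbove (fun _ => μ) 0).symm
  rw [← he.lintegral_comp hf, lintegral_prod_symm' (fun z => f (e z)) (hf.comp e.measurable)]
  simp [e, MeasurableEquiv.piFinSuccAbove_symm_apply, Fin.insertNthEquiv]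

theorem Fin.prod_filter_lt_succ {M : Type*} [CommMonoid M] {n : ℕ}
    (h : Fin (n + 1) × Fin (n + 1) → M) :
    ∏ jk ∈ univ.filter (fun jk : Fin (n + 1) × Fin (n + 1) => jk.1 < jk.2), h jk =
      (∏ k : Fin n, h (0, k.succ)) *
        ∏ jk ∈ univ.filter (fun jk : Fin n × Fin n => jk.1 < jk.2), h (jk.1.succ, jk.2.succ) := by
  simp [Finset.prod_filter, Fintype.prod_prod_type, Fin.prod_univ_succ, Fin.succ_pos]

section Finner

variable {X : Type*} {n s : ℕ}

noncomputable def pairProd (r : ℝ) (F : Fin n → Fin n → X × X → ℝ≥0∞) (x : Fin n → X) : ℝ≥0∞ :=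
  ∏ jk ∈ univ.filter (fun jk : Fin n × Fin n => jk.1 < jk.2), F jk.1 jk.2 (x jk.1, x jk.2) ^ r

noncomputable def rowProd (r : ℝ) (G : Fin s → Fin n → X → ℝ≥0∞) (x : Fin n → X) : ℝ≥0∞ :=
  ∏ l, ∏ k, G l k (x k) ^ r

theorem pairProd_cons (r : ℝ) (F : Fin (n + 1) → Fin (n + 1) → X × X → ℝ≥0∞) (t : X)
    (y : Fin n → X) :
    pairProd r F (Fin.cons t y) =
      (∏ k, F 0 k.succ (t, y k) ^ r) * pairProd r (fun j k => F j.succ k.succ) y := by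
  simp only [pairProd, Fin.prod_filter_lt_succ, Fin.cons_zero, Fin.cons_succ]

theorem rowProd_cons (r : ℝ) (G : Fin s → Fin (n + 1) → X → ℝ≥0∞) (t : X) (y : Fin n → X) :
    rowProd r G (Fin.cons t y) = (∏ l, G l 0 t ^ r) * rowProd r (fun l k => G l k.succ) y := by
  simp only [rowProd, Fin.prod_univ_succ, Fin.cons_zero, Fin.cons_succ, prod_mul_distrib]

theorem rowProd_cons_row (r : ℝ) (g : Fin n → X → ℝ≥0∞) (G : Fin s → Fin n → X → ℝ≥0∞)
    (y : Fin n → X) :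
    rowProd r (Fin.cons g G : Fin (s + 1) → Fin n → X → ℝ≥0∞) y =
      (∏ k, g k (y k) ^ r) * rowProd r G y := by
  simp only [rowProd, Fin.prod_univ_succ, Fin.cons_zero, Fin.cons_succ]

variable [MeasurableSpace X]

theorem measurable_pairProd (r : ℝ) {F : Fin n → Fin n → X × X → ℝ≥0∞}
    (hF : ∀ j k, j < k → Measurable (F j k)) : Measurable (pairProd r F) :=
  Finset.measurable_prod _ fun jk hjk =>
    ((hF _ _ (mem_filter.mp hjk).2).comp (by fun_prop)).pow_const r

theorem measurable_rowProd (r : ℝ) {G : Fin s → Fin n → X → ℝ≥0∞}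
    (hG : ∀ l k, Measurable (G l k)) : Measurable (rowProd r G) :=
  Finset.measurable_prod _ fun l _ => Finset.measurable_prod _ fun k _ =>
    ((hG l k).comp (measurable_pi_apply k)).pow_const r

variable (μ : Measure X)

theorem lintegral_pairProd_mul_rowProd_cons_le {r : ℝ} (hr : ((n + s : ℕ) : ℝ) * r = 1)
    {F : Fin (n + 1) → Fin (n + 1) → X × X → ℝ≥0∞} {G : Fin s → Fin (n + 1) → X → ℝ≥0∞}
    (hF : ∀ j k, j < k → Measurable (F j k)) (hG : ∀ l k, Measurable (G l k)) (y : Fin n → X) :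
    ∫⁻ t, pairProd r F (Fin.cons t y) * rowProd r G (Fin.cons t y) ∂μ ≤
      (∏ l, (∫⁻ z, G l 0 z ∂μ) ^ r) *
        (pairProd r (fun j k => F j.succ k.succ) y *
          rowProd r (Fin.cons (fun k z => ∫⁻ t, F 0 k.succ (t, z) ∂μ) fun l k => G l k.succ)
            y) := by
  set Φ : Fin n ⊕ Fin s → X → ℝ≥0∞ :=
    Sum.elim (fun k t => F 0 k.succ (t, y k)) (fun l t => G l 0 t) with hΦ
  have hΦm : ∀ i, Measurable (Φ i) := by
    rintro (k | l)
    · exact (hF 0 k.succ k.succ_pos).comp (measurable_id.prodMk measurable_const)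
    · exact hG l 0
  have hcard : (Fintype.card (Fin n ⊕ Fin s) : ℝ) * r = 1 := by
    rwa [Fintype.card_sum, Fintype.card_fin, Fintype.card_fin]
  have hsplit : ∀ t, pairProd r F (Fin.cons t y) * rowProd r G (Fin.cons t y) =
      (∏ i, Φ i t ^ r) *
        (pairProd r (fun j k => F j.succ k.succ) y * rowProd r (fun l k => G l k.succ) y) := by
    intro t
    simp only [pairProd_cons, rowProd_cons, Fintype.prod_sum_type, hΦ, Sum.elim_inl,
      Sum.elim_inr]
    ring
  simp_rw [hsplit]
  rw [lintegral_mul_const _ (Finset.measurable_prod _ fun i _ => (hΦm i).pow_const r)]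
  refine (mul_le_mul_left (lintegral_prod_rpow_le_of_card_mul_eq_one
    (fun i => (hΦm i).aemeasurable) hcard) _).trans_eq ?_
  simp only [Fintype.prod_sum_type, hΦ, Sum.elim_inl, Sum.elim_inr, rowProd_cons_row]
  ring

variable [SigmaFinite μ]

theorem lintegral_pairProd_mul_rowProd_le {r : ℝ} (hr : ((s + n : ℝ) - 1) * r = 1)
    {F : Fin n → Fin n → X × X → ℝ≥0∞} {G : Fin s → Fin n → X → ℝ≥0∞}
    (hF : ∀ j k, j < k → Measurable (F j k)) (hG : ∀ l k, Measurable (G l k)) :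
    ∫⁻ x, pairProd r F x * rowProd r G x ∂Measure.pi (fun _ => μ) ≤
      (∏ jk ∈ univ.filter (fun jk : Fin n × Fin n => jk.1 < jk.2),
          (∫⁻ z, F jk.1 jk.2 z ∂μ.prod μ) ^ r) * ∏ l, ∏ k, (∫⁻ z, G l k z ∂μ) ^ r := by
  induction n generalizing s with
  | zero => simp [pairProd, rowProd]
  | succ n ih =>
    set G' : Fin (s + 1) → Fin n → X → ℝ≥0∞ :=
      Fin.cons (fun k z => ∫⁻ t, F 0 k.succ (t, z) ∂μ) (fun l k => G l k.succ) with hG'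
    have hF' : ∀ j k : Fin n, j < k → Measurable (F j.succ k.succ) :=
      fun j k hjk => hF _ _ (Fin.succ_lt_succ_iff.mpr hjk)
    have hG'm : ∀ l k, Measurable (G' l k) :=
      Fin.cases (fun k => (hF 0 k.succ k.succ_pos).lintegral_prod_left') (fun l k => hG l k.succ)
    have hG'int : ∀ k, ∫⁻ z, G' 0 k z ∂μ = ∫⁻ z, F 0 k.succ z ∂μ.prod μ := fun k =>
      (lintegral_prod_symm' _ (hF 0 k.succ k.succ_pos)).symm
    have hr' : (((s + 1 : ℕ) : ℝ) + n - 1) * r = 1 := by push_cast at hr ⊢; linarith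
    have hr'' : ((n + s : ℕ) : ℝ) * r = 1 := by push_cast at hr ⊢; linarith
    set K := ∏ l, (∫⁻ z, G l 0 z ∂μ) ^ r
    calc _ = ∫⁻ y, ∫⁻ t, pairProd r F (Fin.cons t y) * rowProd r G (Fin.cons t y) ∂μ
          ∂Measure.pi (fun _ => μ) :=
          lintegral_pi_fin_succ μ ((measurable_pairProd r hF).mul (measurable_rowProd r hG))
      _ ≤ ∫⁻ y, K * (pairProd r (fun j k => F j.succ k.succ) y * rowProd r G' y)
          ∂Measure.pi (fun _ => μ) :=
          lintegral_mono fun y => lintegral_pairProd_mul_rowProd_cons_le μ hr'' hF hG y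
      _ = K * ∫⁻ y, pairProd r (fun j k => F j.succ k.succ) y * rowProd r G' y
          ∂Measure.pi (fun _ => μ) :=
          lintegral_const_mul K ((measurable_pairProd r hF').mul (measurable_rowProd r hG'm))
      _ ≤ K * ((∏ jk ∈ univ.filter (fun jk : Fin n × Fin n => jk.1 < jk.2),
          (∫⁻ z, F jk.1.succ jk.2.succ z ∂μ.prod μ) ^ r) * ∏ l, ∏ k, (∫⁻ z, G' l k z ∂μ) ^ r) :=
          mul_le_mul_right (ih hr' hF' hG'm) K
      _ = _ := by
          simp only [Fin.prod_filter_lt_succ, Fin.prod_univ_succ, hG'int, K, prod_mul_distrib]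
          simp only [hG', Fin.cons_succ]
          ring

theorem lintegral_pairProd_le {r : ℝ} (hr : ((n : ℝ) - 1) * r = 1)
    {F : Fin n → Fin n → X × X → ℝ≥0∞} (hF : ∀ j k, j < k → AEMeasurable (F j k) (μ.prod μ)) :
    ∫⁻ x, pairProd r F x ∂Measure.pi (fun _ => μ) ≤
      ∏ jk ∈ univ.filter (fun jk : Fin n × Fin n => jk.1 < jk.2),
        (∫⁻ z, F jk.1 jk.2 z ∂μ.prod μ) ^ r := by
  have hmaj : ∀ j k, ∃ g : X × X → ℝ≥0∞, Measurable g ∧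
      (j < k → F j k ≤ g ∧ g =ᵐ[μ.prod μ] F j k) := fun j k => by
    by_cases hjk : j < k
    · obtain ⟨g, hg, hFg, hgF⟩ := (hF j k hjk).exists_measurable_ge_ae_eq
      exact ⟨g, hg, fun _ => ⟨hFg, hgF⟩⟩
    · exact ⟨0, measurable_const, fun h => absurd h hjk⟩
  choose g hg hFg using hmaj
  -- a pair `j < k` forces `n ≥ 2`, hence `r > 0`
  have hr0 : ∀ jk ∈ univ.filter (fun jk : Fin n × Fin n => jk.1 < jk.2), 0 ≤ r := by
    intro jk hjk
    have h2n : (2 : ℝ) ≤ n := by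
      have := (mem_filter.mp hjk).2
      have := jk.2.isLt
      norm_cast; omega
    nlinarith
  calc _ ≤ ∫⁻ x, pairProd r g x ∂Measure.pi (fun _ => μ) :=
        lintegral_mono fun x => prod_le_prod' fun jk hjk =>
          ENNReal.rpow_le_rpow ((hFg _ _ (mem_filter.mp hjk).2).1 _) (hr0 jk hjk)
    _ ≤ ∏ jk ∈ univ.filter (fun jk : Fin n × Fin n => jk.1 < jk.2),
          (∫⁻ z, g jk.1 jk.2 z ∂μ.prod μ) ^ r := by
        simpa only [rowProd, univ_eq_empty, prod_empty, mul_one] using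
          lintegral_pairProd_mul_rowProd_le μ (s := 0) (by simpa using hr)
            (G := Fin.elim0) (fun j k _ => hg j k) (fun l => l.elim0)
    _ = _ := prod_congr rfl fun jk hjk => by
        rw [lintegral_congr_ae (hFg _ _ (mem_filter.mp hjk).2).2]

end Finner

theorem geometric_brascamp_lieb_torus_general (p : ℕ) :
    ∃ C : ℝ, 0 < C ∧
      ∀ f : Fin (2 * p) → Fin (2 * p) → Torus2 × Torus2 → ℝ,
        (∀ j k : Fin (2 * p), j < k → Integrable (f j k)) →
        (∫⁻ x : Fin (2 * p) → Torus2,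
            ∏ jk ∈ Finset.univ.filter (fun jk : Fin (2 * p) × Fin (2 * p) => jk.1 < jk.2),
              ENNReal.ofReal |f jk.1 jk.2 (x jk.1, x jk.2)| ^
                ((1 : ℝ) / (2 * (p : ℝ) - 1)))
          ≤ ENNReal.ofReal C *
            ∏ jk ∈ Finset.univ.filter (fun jk : Fin (2 * p) × Fin (2 * p) => jk.1 < jk.2),
              (∫⁻ yz : Torus2 × Torus2, ENNReal.ofReal |f jk.1 jk.2 yz|) ^
                ((1 : ℝ) / (2 * (p : ℝ) - 1)) := by
  refine ⟨1, one_pos, fun f hf => ?_⟩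
  rw [ENNReal.ofReal_one, one_mul]
  have hp : (2 * p : ℝ) - 1 ≠ 0 := by
    intro h
    have : (2 * p : ℝ) = 1 := by linarith
    norm_cast at this
    omega
  have hr : (((2 * p : ℕ) : ℝ) - 1) * (1 / (2 * (p : ℝ) - 1)) = 1 := by
    push_cast
    exact mul_one_div_cancel hp
  exact lintegral_pairProd_le (volume : Measure Torus2)
    (F := fun j k z => ENNReal.ofReal |f j k z|) hr
    fun j k hjk => ENNReal.measurable_ofReal.comp_aemeasurable (hf j k hjk).aemeasurable.abs

/-- geometric Brascamp–Lieb / Finner inequality on the torus: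
for every integer `p ≥ 1` there is `C = C(p) > 0` such that for every family of integrable
functions `f_{j,k} : 𝕋² × 𝕋² → ℝ` indexed by pairs `j < k` in `{1,…,2p}`,
`∫_{(𝕋²)^{2p}} ∏_{j<k} |f_{j,k}(x_j,x_k)|^{1/(2p−1)} dx
  ≤ C ∏_{j<k} (∫_{𝕋²×𝕋²} |f_{j,k}|)^{1/(2p−1)}`. -/
theorem geometric_brascamp_lieb_torus (p : ℕ) (hp : 1 ≤ p) :
    ∃ C : ℝ, 0 < C ∧
      ∀ f : Fin (2 * p) → Fin (2 * p) → Torus2 × Torus2 → ℝ,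
        (∀ j k : Fin (2 * p), j < k → Integrable (f j k)) →
        (∫⁻ x : Fin (2 * p) → Torus2,
            ∏ jk ∈ Finset.univ.filter (fun jk : Fin (2 * p) × Fin (2 * p) => jk.1 < jk.2),
              ENNReal.ofReal |f jk.1 jk.2 (x jk.1, x jk.2)| ^
                ((1 : ℝ) / (2 * (p : ℝ) - 1)))
          ≤ ENNReal.ofReal C *
            ∏ jk ∈ Finset.univ.filter (fun jk : Fin (2 * p) × Fin (2 * p) => jk.1 < jk.2),
              (∫⁻ yz : Torus2 × Torus2, ENNReal.ofReal |f jk.1 jk.2 yz|) ^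
                ((1 : ℝ) / (2 * (p : ℝ) - 1)) :=
  geometric_brascamp_lieb_torus_general p
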